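/- arXiv:2404.01404 — 6 statements merged into one kernel-verified Lean document; each statement's English description precedes it below -/
import Mathlib

section
/- Let n be odd, W and M disjoint sets with |W| = |M| = n, I = W ∪ M, and let S ≤ G* be semiregular with S not contained in G. Then |S| divides 2n, |S| is even, the number of orbits of S on I is odd, and for every z ∈ I, the orbit of z under S contains exactly |S|/2 elements of W and |S|/2 elements of M. -/
variable {I : Type*}

/-- `μ` is a matching: it maps `W` into `M` and `M` into `W`, and is an involution. -/
def IsMatching [DecidableEq I] (W M : Finset I) (μ : Equiv.Perm I) : Prop :=
  (∀ x ∈ W, μ x ∈ M) ∧ (∀ y ∈ M, μ y ∈ W) ∧ ∀ z : I, μ (μ z) = z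

/-- `φ ∈ G*`: `φ` preserves the partition `{W, M}`. -/
def InGstar [DecidableEq I] (W M : Finset I) (φ : Equiv.Perm I) : Prop :=
  (W.image ⇑φ = W ∧ M.image ⇑φ = M) ∨ (W.image ⇑φ = M ∧ M.image ⇑φ = W)

/-- `φ ∈ G`: `φ` maps `W` onto `W` and `M` onto `M`. -/
def InG [DecidableEq I] (W M : Finset I) (φ : Equiv.Perm I) : Prop :=
  W.image ⇑φ = W ∧ M.image ⇑φ = M

/-- The orbit of `z` under a subgroup `S` of the symmetric group on `I`. -/
def subgroupOrbit (S : Subgroup (Equiv.Perm I)) (z : I) : Set I :=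
  {w : I | ∃ s ∈ S, s z = w}

theorem stmt8 [Fintype I] [DecidableEq I] (W M : Finset I) (n : ℕ)
    (hd : Disjoint W M) (hu : W ∪ M = Finset.univ)
    (hW : W.card = n) (hM : M.card = n) (hn : 2 ≤ n) (hodd : Odd n)
    (S : Subgroup (Equiv.Perm I)) (hSG : ∀ s ∈ S, InGstar W M s)
    (hnotG : ∃ s ∈ S, ¬ InG W M s)
    (hsemi : ∀ s ∈ S, (∃ z : I, s z = z) → s = 1) :
    (Nat.card S ∣ 2 * n) ∧ Even (Nat.card S) ∧
    Odd ({o : Set I | ∃ z : I, o = subgroupOrbit S z}.ncard) ∧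
    (∀ z : I, (subgroupOrbit S z ∩ ↑W).ncard = Nat.card S / 2 ∧
      (subgroupOrbit S z ∩ ↑M).ncard = Nat.card S / 2) := by
  classical
  obtain ⟨s₀, hs₀S, hs₀⟩ := hnotG
  have hWM : W ≠ M := by
    intro h
    have hWd : Disjoint W W := by rw [h] at hd ⊢; exact hd
    have : W = ∅ := by simpa using disjoint_self.mp hWd
    rw [this] at hW
    simp at hW; omega
  -- dichotomy for elements of S
  have hdich : ∀ s ∈ S, (W.image ⇑s = W ∧ M.image ⇑s = M) ∨
      (W.image ⇑s = M ∧ M.image ⇑s = W) := fun s hs => hSG s hs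
  have hswap0 : W.image ⇑s₀ = M ∧ M.image ⇑s₀ = W := by
    rcases hdich s₀ hs₀S with h | h
    · exact absurd h hs₀
    · exact h
  have hcomp : ∀ s t : Equiv.Perm I, W.image ⇑(s * t) = (W.image ⇑t).image ⇑s := by
    intro s t
    rw [Finset.image_image]
    rfl
  -- the two halves of S
  set A : Set (Equiv.Perm I) := {s | s ∈ S ∧ W.image ⇑s = W} with hAdef
  set B : Set (Equiv.Perm I) := {s | s ∈ S ∧ W.image ⇑s = M} with hBdef
  have hBA : B = (fun s => s₀ * s) '' A := by
    ext t
    constructor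
    · rintro ⟨htS, htW⟩
      refine ⟨s₀⁻¹ * t, ⟨mul_mem (inv_mem hs₀S) htS, ?_⟩, by group⟩
      rw [hcomp, htW, ← hswap0.1, Finset.image_image]
      have : ⇑s₀⁻¹ ∘ ⇑s₀ = id := by
        funext x; simp
      rw [this, Finset.image_id]
    · rintro ⟨s, ⟨hsS, hsW⟩, rfl⟩
      exact ⟨mul_mem hs₀S hsS, by rw [hcomp, hsW, hswap0.1]⟩
  have hcardBA : B.ncard = A.ncard := by
    rw [hBA]
    exact Set.ncard_image_of_injective A (mul_right_injective s₀)
  have hunion : (S : Set (Equiv.Perm I)) = A ∪ B := by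
    ext s
    constructor
    · intro hs
      rcases hdich s hs with h | h
      · exact Or.inl ⟨hs, h.1⟩
      · exact Or.inr ⟨hs, h.1⟩
    · rintro (h | h) <;> exact h.1
  have hdisjAB : Disjoint A B := by
    rw [Set.disjoint_left]
    rintro s ⟨_, h1⟩ ⟨_, h2⟩
    exact hWM (h1 ▸ h2 ▸ rfl)
  have hcardS : Nat.card S = (S : Set (Equiv.Perm I)).ncard := by
    rw [← Nat.card_coe_set_eq]
    rfl
  have hNA : Nat.card S = 2 * A.ncard := by
    rw [hcardS, hunion, Set.ncard_union_eq hdisjAB (Set.toFinite A) (Set.toFinite B),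
      hcardBA]
    omega
  -- half of S preserves W and derived facts
  have hMtoW : ∀ s ∈ S, W.image ⇑s = M → M.image ⇑s = W := by
    intro s hs h
    rcases hdich s hs with h' | h'
    · exact absurd (h'.1.symm.trans h) hWM
    · exact h'.2
  have hMtoM : ∀ s ∈ S, W.image ⇑s = W → M.image ⇑s = M := by
    intro s hs h
    rcases hdich s hs with h' | h'
    · exact h'.2
    · exact absurd (h.symm.trans h'.1) hWM
  -- evaluation map at z is injective on S
  have hinj : ∀ z : I, Set.InjOn (fun s : Equiv.Perm I => s z) (S : Set (Equiv.Perm I)) := by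
    intro z s hs t ht h
    have hz : (s⁻¹ * t) z = z := by
      simp only at h
      simp [Equiv.Perm.mul_apply, ← h]
    have := hsemi (s⁻¹ * t) (mul_mem (inv_mem hs) ht) ⟨z, hz⟩
    have := inv_mul_eq_one.mp this
    exact this
  have horb : ∀ z : I, subgroupOrbit S z
      = (fun s : Equiv.Perm I => s z) '' (S : Set (Equiv.Perm I)) := by
    intro z
    ext w
    simp [subgroupOrbit, eq_comm]
  have hzWM : ∀ z : I, z ∈ W ∨ z ∈ M := by
    intro z
    have : z ∈ W ∪ M := by rw [hu]; exact Finset.mem_univ z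
    exact Finset.mem_union.mp this
  have hdisj' := Finset.disjoint_left.mp hd
  -- orbit intersections
  have hkey : ∀ z : I, (subgroupOrbit S z ∩ ↑W).ncard = A.ncard ∧
      (subgroupOrbit S z ∩ ↑M).ncard = A.ncard := by
    intro z
    rcases hzWM z with hz | hz
    · have h1 : subgroupOrbit S z ∩ ↑W = (fun s : Equiv.Perm I => s z) '' A := by
        rw [horb]
        ext w
        constructor
        · rintro ⟨⟨s, hsS, rfl⟩, hw⟩
          refine ⟨s, ⟨hsS, ?_⟩, rfl⟩
          rcases hdich s hsS with h | h
          · exact h.1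
          · exact absurd (h.1 ▸ Finset.mem_image_of_mem ⇑s hz) (fun hmem => hdisj' hw hmem)
        · rintro ⟨s, ⟨hsS, hsW⟩, rfl⟩
          exact ⟨⟨s, hsS, rfl⟩, hsW ▸ Finset.mem_image_of_mem ⇑s hz⟩
      have h2 : subgroupOrbit S z ∩ ↑M = (fun s : Equiv.Perm I => s z) '' B := by
        rw [horb]
        ext w
        constructor
        · rintro ⟨⟨s, hsS, rfl⟩, hw⟩
          refine ⟨s, ⟨hsS, ?_⟩, rfl⟩
          rcases hdich s hsS with h | h
          · exact absurd hw (fun hmem => hdisj' (h.1 ▸ Finset.mem_image_of_mem ⇑s hz) hmem)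
          · exact h.1
        · rintro ⟨s, ⟨hsS, hsW⟩, rfl⟩
          exact ⟨⟨s, hsS, rfl⟩, hsW ▸ Finset.mem_image_of_mem ⇑s hz⟩
      rw [h1, h2, Set.ncard_image_of_injOn ((hinj z).mono (fun s hs => hs.1)),
        Set.ncard_image_of_injOn ((hinj z).mono (fun s hs => hs.1)), hcardBA]
      exact ⟨rfl, rfl⟩
    · have h1 : subgroupOrbit S z ∩ ↑W = (fun s : Equiv.Perm I => s z) '' B := by
        rw [horb]
        ext w
        constructor
        · rintro ⟨⟨s, hsS, rfl⟩, hw⟩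
          refine ⟨s, ⟨hsS, ?_⟩, rfl⟩
          rcases hdich s hsS with h | h
          · exact absurd (h.2 ▸ Finset.mem_image_of_mem ⇑s hz) (fun hmem => hdisj' hw hmem)
          · exact h.1
        · rintro ⟨s, ⟨hsS, hsW⟩, rfl⟩
          exact ⟨⟨s, hsS, rfl⟩,
            (hMtoW s hsS hsW) ▸ Finset.mem_image_of_mem ⇑s hz⟩
      have h2 : subgroupOrbit S z ∩ ↑M = (fun s : Equiv.Perm I => s z) '' A := by
        rw [horb]
        ext w
        constructor
        · rintro ⟨⟨s, hsS, rfl⟩, hw⟩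
          refine ⟨s, ⟨hsS, ?_⟩, rfl⟩
          rcases hdich s hsS with h | h
          · exact h.1
          · exact absurd hw (fun hmem => hdisj' (h.2 ▸ Finset.mem_image_of_mem ⇑s hz) hmem)
        · rintro ⟨s, ⟨hsS, hsW⟩, rfl⟩
          exact ⟨⟨s, hsS, rfl⟩,
            (hMtoM s hsS hsW) ▸ Finset.mem_image_of_mem ⇑s hz⟩
      rw [h1, h2, Set.ncard_image_of_injOn ((hinj z).mono (fun s hs => hs.1)),
        Set.ncard_image_of_injOn ((hinj z).mono (fun s hs => hs.1)), hcardBA]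
      exact ⟨rfl, rfl⟩
  -- subgroupOrbit equals MulAction.orbit
  have horbeq : ∀ z : I, subgroupOrbit S z = MulAction.orbit S z := by
    intro z
    ext w
    simp only [subgroupOrbit, Set.mem_setOf_eq, MulAction.mem_orbit_iff]
    constructor
    · rintro ⟨s, hs, rfl⟩
      exact ⟨⟨s, hs⟩, rfl⟩
    · rintro ⟨⟨s, hs⟩, rfl⟩
      exact ⟨s, hs, rfl⟩
  -- each orbit is equivalent to S
  have horbequiv : ∀ z : I, Nonempty ((S : Type _) ≃ MulAction.orbit S z) := by
    intro z
    refine ⟨Equiv.ofBijective (fun g => ⟨g • z, MulAction.mem_orbit z g⟩) ⟨?_, ?_⟩⟩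
    · rintro ⟨s, hs⟩ ⟨t, ht⟩ h
      simp only [Subtype.mk.injEq] at h
      have h' : s z = t z := h
      exact Subtype.ext ((hinj z) hs ht h')
    · rintro ⟨w, hw⟩
      rcases hw with ⟨g, rfl⟩
      exact ⟨g, rfl⟩
  -- count: card I = (number of orbits) * card S
  set Ω := MulAction.orbitRel.Quotient (↥S) I with hΩdef
  have hIequiv : Nonempty (I ≃ Ω × ↥S) := by
    refine ⟨(MulAction.selfEquivSigmaOrbits (↥S) I).trans ?_⟩
    refine (Equiv.sigmaCongrRight fun ω : Ω => (Classical.choice (horbequiv (Quotient.out ω))).symm).trans ?_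
    exact Equiv.sigmaEquivProd Ω ↥S
  have hcardI : Fintype.card I = Nat.card Ω * Nat.card S := by
    rw [← Nat.card_eq_fintype_card, Nat.card_congr (Classical.choice hIequiv), Nat.card_prod]
  have hcardI2 : Fintype.card I = 2 * n := by
    rw [← Finset.card_univ, ← hu, Finset.card_union_of_disjoint hd, hW, hM]
    omega
  -- the set of orbits is the range of the quotient orbit map
  have hO : {o : Set I | ∃ z : I, o = subgroupOrbit S z}
      = Set.range (MulAction.orbitRel.Quotient.orbit : Ω → Set I) := by
    ext o
    constructor
    · rintro ⟨z, rfl⟩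
      exact ⟨⟦z⟧, by rw [MulAction.orbitRel.Quotient.orbit_mk, horbeq]⟩
    · rintro ⟨x, rfl⟩
      exact ⟨x.out, by
        rw [horbeq, MulAction.orbitRel.Quotient.orbit_eq_orbit_out x Quotient.out_eq']⟩
  have hOcard : {o : Set I | ∃ z : I, o = subgroupOrbit S z}.ncard = Nat.card Ω := by
    rw [hO, ← Nat.card_coe_set_eq,
      Nat.card_range_of_injective MulAction.orbitRel.Quotient.orbit_injective]
  -- put everything together
  set k := Nat.card Ω with hkdef
  set a := A.ncard with hadef
  have hkN : k * (2 * a) = 2 * n := by rw [← hNA, ← hcardI, hcardI2]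
  have hka : k * a = n := by
    have h2 : 2 * (k * a) = 2 * n := by rw [← hkN]; ring
    omega
  have hkodd : Odd k := by
    rcases Nat.even_or_odd k with hk | hk
    · exfalso
      rcases hk with ⟨m, hm⟩
      rcases hodd with ⟨m', hm'⟩
      have : n = 2 * (m * a) := by rw [← hka, hm]; ring
      omega
    · exact hk
  refine ⟨⟨k, by rw [hNA, ← hka]; ring⟩, ⟨a, by omega⟩, hOcard ▸ hkodd, fun z => ?_⟩
  have := hkey z
  rw [this.1, this.2, hNA]
  omega
end

section
/- Let |W| = |M| = n with n even, I = W ∪ M, and let φ ∈ G* \ G be a 2n-cycle. Then there exists no element of order 2 in C_{G*}(⟨φ⟩) ∩ (G* \ G). Consequently, no matching commutes with φ. -/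
variable {I : Type*}

theorem stmt11 [Fintype I] [DecidableEq I] (W M : Finset I) (n : ℕ)
    (hd : Disjoint W M) (hu : W ∪ M = Finset.univ)
    (hW : W.card = n) (hM : M.card = n) (hn : 2 ≤ n) (heven : Even n)
    (φ : Equiv.Perm I) (hc : φ.IsCycle) (hfull : φ.support = Finset.univ)
    (hφ : InGstar W M φ) (hφG : ¬ InG W M φ) :
    (¬ ∃ ψ : Equiv.Perm I, Commute φ ψ ∧ InGstar W M ψ ∧ ¬ InG W M ψ ∧ orderOf ψ = 2) ∧
    (∀ μ : Equiv.Perm I, IsMatching W M μ → ¬ Commute φ μ) := by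
  classical
  -- G as a subgroup
  let H : Subgroup (Equiv.Perm I) :=
    { carrier := {σ | InG W M σ}
      one_mem' := by simp [InG]
      mul_mem' := by
        rintro a b ⟨haW, haM⟩ ⟨hbW, hbM⟩
        constructor
        · rw [show ⇑(a * b) = ⇑a ∘ ⇑b from rfl, ← Finset.image_image, hbW, haW]
        · rw [show ⇑(a * b) = ⇑a ∘ ⇑b from rfl, ← Finset.image_image, hbM, haM]
      inv_mem' := by
        rintro a ⟨haW, haM⟩
        constructor
        · conv_lhs => rw [← haW]
          rw [Finset.image_image]
          have : (⇑a⁻¹ ∘ ⇑a) = id := by ext x; simp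
          rw [this, Finset.image_id]
        · conv_lhs => rw [← haM]
          rw [Finset.image_image]
          have : (⇑a⁻¹ ∘ ⇑a) = id := by ext x; simp
          rw [this, Finset.image_id] }
  have hswap : W.image ⇑φ = M ∧ M.image ⇑φ = W := by
    rcases hφ with h | h
    · exact absurd h hφG
    · exact h
  have hφ2 : φ ^ 2 ∈ H := by
    constructor
    · rw [show ⇑(φ ^ 2) = ⇑φ ∘ ⇑φ from by rw [pow_two]; rfl, ← Finset.image_image,
        hswap.1, hswap.2]
    · rw [show ⇑(φ ^ 2) = ⇑φ ∘ ⇑φ from by rw [pow_two]; rfl, ← Finset.image_image,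
        hswap.2, hswap.1]
  have hcard : Fintype.card I = 2 * n := by
    rw [← Finset.card_univ, ← hu, Finset.card_union_of_disjoint hd, hW, hM]; ring
  have hord : orderOf φ = 2 * n := by
    rw [hc.orderOf, hfull, Finset.card_univ, hcard]
  have key : ∀ ψ : Equiv.Perm I, Commute φ ψ → orderOf ψ = 2 → ψ ∈ H := by
    intro ψ hcomm hord2
    -- ψ is a power of φ
    have hmem : ψ ∈ Subgroup.zpowers φ := by
      obtain ⟨hc', hz⟩ := hc.commute_iff.mp hcomm.symm
      have : Equiv.Perm.ofSubtype (ψ.subtypePerm hc') = ψ := by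
        ext x
        rw [Equiv.Perm.ofSubtype_apply_of_mem (ψ.subtypePerm hc')
          (by rw [hfull]; exact Finset.mem_univ x)]
        rfl
      rwa [this] at hz
    obtain ⟨k, hk⟩ := hmem
    simp only at hk
    -- φ ^ (2k) = 1, so 2n ∣ 2k, so n ∣ k
    have h1 : φ ^ (2 * k) = 1 := by
      rw [mul_comm, zpow_mul, hk]
      norm_cast
      rw [← hord2]
      exact pow_orderOf_eq_one ψ
    have h2 : ((2 * n : ℕ) : ℤ) ∣ 2 * k := by
      rw [← hord]
      exact orderOf_dvd_iff_zpow_eq_one.mpr h1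
    have h3 : (n : ℤ) ∣ k := by
      have : (2 : ℤ) * n ∣ 2 * k := by exact_mod_cast h2
      exact (mul_dvd_mul_iff_left (by norm_num : (2:ℤ) ≠ 0)).mp this
    obtain ⟨m, hm⟩ := h3
    obtain ⟨t, ht⟩ := heven
    have hψ : ψ = (φ ^ 2) ^ (t * m : ℤ) := by
      rw [← hk, hm, ← zpow_natCast φ 2, ← zpow_mul]
      congr 1
      push_cast [ht]
      ring
    rw [hψ]
    exact zpow_mem hφ2 _
  constructor
  · rintro ⟨ψ, hcomm, _, hψG, hord2⟩
    exact hψG (key ψ hcomm hord2)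
  · intro μ hμ hcomm
    obtain ⟨hμW, hμM, hinv⟩ := hμ
    have himgW : W.image ⇑μ = M := by
      apply Finset.eq_of_subset_of_card_le
      · intro y hy
        obtain ⟨x, hx, rfl⟩ := Finset.mem_image.mp hy
        exact hμW x hx
      · rw [Finset.card_image_of_injective _ μ.injective, hW, hM]
    have himgM : M.image ⇑μ = W := by
      apply Finset.eq_of_subset_of_card_le
      · intro y hy
        obtain ⟨x, hx, rfl⟩ := Finset.mem_image.mp hy
        exact hμM x hx
      · rw [Finset.card_image_of_injective _ μ.injective, hW, hM]
    have hWne : W.Nonempty := by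
      rw [← Finset.card_pos, hW]; omega
    have hμne : μ ≠ 1 := by
      obtain ⟨x, hx⟩ := hWne
      intro h
      have : μ x = x := by rw [h]; rfl
      have hxM : x ∈ M := this ▸ hμW x hx
      exact (Finset.disjoint_left.mp hd hx) hxM
    have hμ2 : μ ^ 2 = 1 := by
      ext x
      simp [pow_two, hinv x]
    have hordμ : orderOf μ = 2 :=
      orderOf_eq_prime hμ2 hμne
    have : μ ∈ H := key μ hcomm hordμ
    obtain ⟨hHW, _⟩ := this
    rw [himgW] at hHW
    obtain ⟨x, hx⟩ := hWne
    exact Finset.disjoint_left.mp hd hx (hHW ▸ hx)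
end

section
/- Let n be odd, |W| = |M| = n, I = W ∪ M, and let S ≤ G* be a semiregular subgroup. Then there exists φ ∈ G* \ G of order 2 that commutes with every element of S, i.e., C_{G*}(S) ∩ (G* \ G) contains an element of order 2 (equivalently, a matching commuting with all of S). -/
variable {I : Type*}

/-!
Since `S` acts freely, `I ≅ Q × S` as `S`-sets, where `Q` is the set of orbits and `S` acts by
left multiplication on the second factor. Every map `(q, s) ↦ (f q, s * t)` commutes with `S`, and
it is an involution when `f` is one and `t * t = 1`.

If `S ≤ G`, then `W` and `M` are unions of orbits, `n / |S|` of each, and any involution `f` of `Q`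
pairing the orbits in `W` with those in `M` (with `t = 1`) gives a matching. Otherwise some element
of `S` swaps `W` and `M`; it has even order, so `S` contains an element `t` of order `2`. Such a `t`
cannot preserve `W`, since an involution of a set of odd size has a fixed point; hence it swaps the
two sides, and so does `(q, s) ↦ (q, s * t)`.
-/

open Equiv Function MulAction Pointwise

lemma exists_involutive_swap_of_card_eq {α : Type*} [Finite α] (p : α → Prop)
    (h : Nat.card {a // p a} = Nat.card {a // ¬ p a}) :
    ∃ f : Perm α, Involutive f ∧ ∀ a, p (f a) ↔ ¬ p a := by
  classical
  obtain ⟨β⟩ := Finite.card_eq.mp h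
  let σ : Perm ({a // p a} ⊕ {a // ¬ p a}) := (β.sumCongr β.symm).trans (sumComm _ _)
  refine ⟨(sumCompl p).permCongr σ, fun a => ?_, fun a => ?_⟩
  · obtain ⟨b, rfl⟩ := (sumCompl p).surjective a
    rcases b with b | b <;> simp [σ, permCongr_apply]
  · obtain ⟨b, rfl⟩ := (sumCompl p).surjective a
    rcases b with ⟨b, hb⟩ | ⟨b, hb⟩
    · simpa [σ, permCongr_apply, hb] using (β ⟨b, hb⟩).2
    · simpa [σ, permCongr_apply, hb] using (β.symm ⟨b, hb⟩).2

def SwapsWithCompl {G X : Type*} [SMul G X] (g : G) (W : Set X) : Prop :=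
  ∀ x, g • x ∈ W ↔ x ∉ W

namespace SwapsWithCompl

variable {G X : Type*} [Monoid G] [MulAction G X] {g : G} {W : Set X}

lemma ne_one (hg : SwapsWithCompl g W) (hW : W.Nonempty) : g ≠ 1 := by
  rintro rfl
  obtain ⟨x, hx⟩ := hW
  exact (hg x).mp (by rwa [one_smul]) hx

lemma pow_smul_mem_iff (hg : SwapsWithCompl g W) (k : ℕ) (x : X) :
    g ^ k • x ∈ W ↔ (x ∈ W ↔ Even k) := by
  induction k generalizing x with
  | zero => simp
  | succ k ih =>
    rw [pow_succ, mul_smul, ih, hg, Nat.even_add_one]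
    tauto

lemma even_orderOf (hg : SwapsWithCompl g W) (hW : W.Nonempty) : Even (orderOf g) := by
  obtain ⟨x, hx⟩ := hW
  have h := hg.pow_smul_mem_iff (orderOf g) x
  rw [pow_orderOf_eq_one, one_smul] at h
  exact (h.mp hx).mp hx

end SwapsWithCompl

namespace MulAction

variable {G X : Type*} [Group G] [MulAction G X]

lemma exists_smul_eq_self_of_odd_card [Finite X] {W : Set X} (hW : Odd (Nat.card W)) {t : G}
    (ht : t ∈ stabilizer G W) (ht2 : t * t = 1) : ∃ x : X, t • x = x := by
  have := Fintype.ofFinite W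
  have htW : ∀ x, t • x ∈ W ↔ x ∈ W := mem_stabilizer_set.mp ht
  let σ : Perm W := (toPerm t).subtypePerm htW
  have hσ : σ ^ 2 ^ 1 = 1 := by
    ext x
    change t • t • (x : X) = x
    rw [smul_smul, ht2, one_smul]
  have hcard : ¬ 2 ∣ Fintype.card W := by
    rwa [Fintype.card_eq_nat_card, ← even_iff_two_dvd, Nat.not_even_iff_odd]
  obtain ⟨x, hx⟩ := Perm.exists_fixed_point_of_prime hcard hσ
  exact ⟨x, congrArg Subtype.val hx⟩

lemma exists_smul_out (x : X) : ∃ (q : orbitRel.Quotient G X) (g : G), g • q.out = x := by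
  obtain ⟨g, hg⟩ := Quotient.mk_out (s := orbitRel G X) x
  exact ⟨⟦x⟧, g⁻¹, by rw [inv_smul_eq_iff]; exact hg.symm⟩

variable [IsCancelSMul G X]

noncomputable def orbitProdPerm (f : Perm (orbitRel.Quotient G X)) (t : G) : Perm X :=
  (selfEquivOrbitsQuotientProd IsCancelSMul.stabilizer_eq_bot).symm.permCongr
    (f.prodCongr (Equiv.mulRight t))

lemma orbitProdPerm_smul_out (f : Perm (orbitRel.Quotient G X)) (t g : G)
    (q : orbitRel.Quotient G X) : orbitProdPerm f t (g • q.out) = (g * t) • (f q).out := by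
  -- `(selfEquivOrbitsQuotientProd _).symm (q, g)` unfolds to `g • q.out`
  change orbitProdPerm f t ((selfEquivOrbitsQuotientProd IsCancelSMul.stabilizer_eq_bot).symm
    (q, g)) = (selfEquivOrbitsQuotientProd IsCancelSMul.stabilizer_eq_bot).symm (f q, g * t)
  simp [orbitProdPerm, permCongr_apply]

lemma orbitProdPerm_smul (f : Perm (orbitRel.Quotient G X)) (t g : G) (x : X) :
    orbitProdPerm f t (g • x) = g • orbitProdPerm f t x := by
  obtain ⟨q, k, rfl⟩ := exists_smul_out (G := G) x
  rw [smul_smul, orbitProdPerm_smul_out, orbitProdPerm_smul_out, smul_smul, mul_assoc]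

lemma orbitProdPerm_involutive {f : Perm (orbitRel.Quotient G X)} (hf : Involutive f) {t : G}
    (ht : t * t = 1) : Involutive (orbitProdPerm f t) := by
  intro x
  obtain ⟨q, k, rfl⟩ := exists_smul_out (G := G) x
  rw [orbitProdPerm_smul_out, orbitProdPerm_smul_out, hf, mul_assoc, ht, mul_one]

lemma natCard_eq_mul_of_smul_out_mem_iff (W : Set X) (p : orbitRel.Quotient G X → Prop)
    (hp : ∀ q (g : G), g • q.out ∈ W ↔ p q) : Nat.card W = Nat.card {q // p q} * Nat.card G :=
  calc Nat.card W = Nat.card {qg : orbitRel.Quotient G X × G // p qg.1} :=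
        Nat.card_congr ((selfEquivOrbitsQuotientProd IsCancelSMul.stabilizer_eq_bot).symm
          |>.subtypeEquiv fun qg => (hp qg.1 qg.2).symm).symm
    _ = Nat.card {q // p q} * Nat.card G := by
        rw [Nat.card_congr prodSubtypeFstEquivSubtypeProd, Nat.card_prod]

lemma exists_swapsWithCompl_orbitProdPerm_of_forall_mem_stabilizer [Finite X] [Finite G]
    {W : Set X} (hW : Nat.card W = Nat.card ↥Wᶜ) (hG : ∀ g : G, g ∈ stabilizer G W) :
    ∃ f : Perm (orbitRel.Quotient G X), Involutive f ∧
      SwapsWithCompl (orbitProdPerm f (1 : G)) W := by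
  let p : orbitRel.Quotient G X → Prop := fun q => q.out ∈ W
  have hp : ∀ q (g : G), g • q.out ∈ W ↔ p q := fun q g => mem_stabilizer_set.mp (hG g) _
  have hpc : ∀ q (g : G), g • q.out ∈ Wᶜ ↔ ¬ p q := fun q g => not_congr (hp q g)
  have hcard : Nat.card {q // p q} = Nat.card {q // ¬ p q} := by
    refine Nat.eq_of_mul_eq_mul_right (Nat.card_pos (α := G)) ?_
    rw [← natCard_eq_mul_of_smul_out_mem_iff _ _ hp,
      ← natCard_eq_mul_of_smul_out_mem_iff _ _ hpc, hW]
  obtain ⟨f, hf, hpf⟩ := exists_involutive_swap_of_card_eq p hcard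
  refine ⟨f, hf, fun x => ?_⟩
  obtain ⟨q, g, rfl⟩ := exists_smul_out (G := G) x
  rw [Perm.smul_def, orbitProdPerm_smul_out, mul_one, hp, hp, hpf]

lemma swapsWithCompl_orbitProdPerm_one {W : Set X}
    (hside : ∀ g : G, g ∈ stabilizer G W ∨ SwapsWithCompl g W) {t : G}
    (ht : SwapsWithCompl t W) : SwapsWithCompl (orbitProdPerm (X := X) 1 t) W := by
  intro x
  obtain ⟨q, g, rfl⟩ := exists_smul_out (G := G) x
  rw [Perm.smul_def, orbitProdPerm_smul_out, Perm.one_apply, mul_smul]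
  rcases hside g with hg | hg
  · rw [mem_stabilizer_set.mp hg, mem_stabilizer_set.mp hg, ht]
  · rw [hg, hg, ht]

lemma exists_mul_self_eq_one_swapsWithCompl [Finite X] [Finite G] {W : Set X}
    (hW : Odd (Nat.card W)) (hside : ∀ g : G, g ∈ stabilizer G W ∨ SwapsWithCompl g W) {τ : G}
    (hτ : SwapsWithCompl τ W) : ∃ t : G, t * t = 1 ∧ SwapsWithCompl t W := by
  have hne : W.Nonempty := Set.nonempty_coe_sort.mp (Nat.card_pos_iff.mp hW.pos).1
  obtain ⟨t, ht⟩ := exists_prime_orderOf_dvd_card' 2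
    ((hτ.even_orderOf hne).two_dvd.trans (orderOf_dvd_natCard τ))
  have ht2 : t * t = 1 := by rw [← sq, ← ht, pow_orderOf_eq_one]
  refine ⟨t, ht2, (hside t).resolve_left fun hst => ?_⟩
  obtain ⟨x, hx⟩ := exists_smul_eq_self_of_odd_card hW hst ht2
  simp [IsCancelSMul.eq_one_of_smul hx] at ht

theorem exists_equivariant_involution_swapsWithCompl [Finite X] [Finite G] {W : Set X}
    (hcard : Nat.card W = Nat.card ↥Wᶜ) (hodd : Odd (Nat.card W))
    (hside : ∀ g : G, g ∈ stabilizer G W ∨ SwapsWithCompl g W) :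
    ∃ φ : Perm X, Involutive φ ∧ (∀ (g : G) x, φ (g • x) = g • φ x) ∧ SwapsWithCompl φ W := by
  suffices ∃ (f : Perm (orbitRel.Quotient G X)) (t : G),
      Involutive f ∧ t * t = 1 ∧ SwapsWithCompl (orbitProdPerm f t) W by
    obtain ⟨f, t, hf, ht, hswap⟩ := this
    exact ⟨_, orbitProdPerm_involutive hf ht, orbitProdPerm_smul f t, hswap⟩
  by_cases hτ : ∃ τ : G, SwapsWithCompl τ W
  · obtain ⟨τ, hτ⟩ := hτ
    obtain ⟨t, ht2, ht⟩ := exists_mul_self_eq_one_swapsWithCompl hodd hside hτ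
    exact ⟨1, t, fun _ => rfl, ht2, swapsWithCompl_orbitProdPerm_one hside ht⟩
  · obtain ⟨f, hf, hswap⟩ := exists_swapsWithCompl_orbitProdPerm_of_forall_mem_stabilizer hcard
      fun g => (hside g).resolve_right fun hg => hτ ⟨g, hg⟩
    exact ⟨f, 1, hf, mul_one 1, hswap⟩

end MulAction

section Partition

variable [DecidableEq I] {W : Finset I} {φ : Perm I}

lemma mem_image_perm_iff (y : I) : y ∈ W.image φ ↔ φ.symm y ∈ W := by
  conv_lhs => rw [← φ.apply_symm_apply y]
  exact φ.injective.mem_finset_image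

variable [Fintype I]

lemma InGstar.mem_stabilizer_or_swapsWithCompl (h : InGstar W Wᶜ φ) :
    φ ∈ stabilizer (Perm I) (W : Set I) ∨ SwapsWithCompl φ (W : Set I) := by
  rcases h with ⟨h, -⟩ | ⟨h, -⟩
  · refine Or.inl (mem_stabilizer_set.mpr fun x => ?_)
    rw [Perm.smul_def, Finset.mem_coe, Finset.mem_coe, ← h, mem_image_perm_iff, h,
      symm_apply_apply]
  · refine Or.inr fun x => ?_
    have hx : φ x ∈ W.image φ ↔ x ∈ W := φ.injective.mem_finset_image
    rw [h, Finset.mem_compl] at hx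
    rw [Perm.smul_def, Finset.mem_coe, Finset.mem_coe, ← hx, not_not]

lemma inGstar_compl_of_swapsWithCompl (hφ : SwapsWithCompl φ (W : Set I)) :
    InGstar W Wᶜ φ := by
  have hsymm : ∀ y, φ.symm y ∈ W ↔ y ∉ W := fun y => by
    simpa using (not_congr (hφ (φ.symm y))).symm
  refine Or.inr ⟨?_, ?_⟩ <;> ext y <;>
    simp only [mem_image_perm_iff, hsymm, Finset.mem_compl, not_not]

lemma not_inG_compl_of_swapsWithCompl (hφ : SwapsWithCompl φ (W : Set I)) (hW : W.Nonempty) :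
    ¬ InG W Wᶜ φ := by
  rintro ⟨h, -⟩
  obtain ⟨x, hx⟩ := hW
  have hφx : φ x ∈ W := h ▸ Finset.mem_image_of_mem φ hx
  exact (hφ x).mp hφx hx

end Partition

theorem stmt12_general [Fintype I] [DecidableEq I] (W M : Finset I) (n : ℕ)
    (hd : Disjoint W M) (hu : W ∪ M = Finset.univ)
    (hW : W.card = n) (hM : M.card = n) (hodd : Odd n)
    (S : Subgroup (Equiv.Perm I)) (hSG : ∀ s ∈ S, InGstar W M s)
    (hsemi : ∀ s ∈ S, (∃ z : I, s z = z) → s = 1) :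
    ∃ φ : Equiv.Perm I, InGstar W M φ ∧ ¬ InG W M φ ∧ orderOf φ = 2 ∧
      ∀ s ∈ S, Commute φ s := by
  obtain rfl : M = Wᶜ := (IsCompl.of_eq hd.eq_bot (by simpa using hu)).compl_eq.symm
  have : IsCancelSMul S I := isCancelSMul_iff_eq_one_of_smul_eq.mpr fun s x hx =>
    Subtype.ext (hsemi s s.2 ⟨x, hx⟩)
  have hWne : W.Nonempty := Finset.card_pos.mp (hW ▸ hodd.pos)
  have hcard : Nat.card (W : Set I) = Nat.card ↥(W : Set I)ᶜ := by
    rw [← Finset.coe_compl, Finset.coe_sort_coe, Finset.coe_sort_coe, Nat.card_eq_finsetCard,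
      Nat.card_eq_finsetCard, hW, hM]
  obtain ⟨φ, hφ2, hφS, hφW⟩ := exists_equivariant_involution_swapsWithCompl hcard
    (by simpa [hW]) fun s : S => (hSG s s.2).mem_stabilizer_or_swapsWithCompl
  refine ⟨φ, inGstar_compl_of_swapsWithCompl hφW, not_inG_compl_of_swapsWithCompl hφW hWne,
    orderOf_eq_prime ?_ (hφW.ne_one (by simpa using hWne)), fun s hs => ?_⟩
  · ext x
    simp [sq, hφ2 x]
  · ext x
    exact hφS ⟨s, hs⟩ x

theorem stmt12 [Fintype I] [DecidableEq I] (W M : Finset I) (n : ℕ)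
    (hd : Disjoint W M) (hu : W ∪ M = Finset.univ)
    (hW : W.card = n) (hM : M.card = n) (hn : 2 ≤ n) (hodd : Odd n)
    (S : Subgroup (Equiv.Perm I)) (hSG : ∀ s ∈ S, InGstar W M s)
    (hsemi : ∀ s ∈ S, (∃ z : I, s z = z) → s = 1) :
    ∃ φ : Equiv.Perm I, InGstar W M φ ∧ ¬ InG W M φ ∧ orderOf φ = 2 ∧
      ∀ s ∈ S, Commute φ s :=
  stmt12_general W M n hd hu hW hM hodd S hSG hsemi
end

section
/- Let p be a preference profile on W ∪ M with |W| = |M| = n ≥ 2. Then the stabilizer Stab_{G*}(p) = {φ ∈ G* : p^φ = p} is a semiregular subgroup of G*: no non-identity element of G* fixing p fixes any individual. -/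
variable {I : Type*}

/-- `R` is a linear order on the set `X`. -/
def IsLinearOrderOn (X : Set I) (R : Set (I × I)) : Prop :=
  R ⊆ X ×ˢ X ∧
  (∀ x ∈ X, ∀ y ∈ X, (x, y) ∈ R ∨ (y, x) ∈ R) ∧
  (∀ x y : I, (x, y) ∈ R → (y, x) ∈ R → x = y) ∧
  (∀ x y z : I, (x, y) ∈ R → (y, z) ∈ R → (x, z) ∈ R)

/-- `p` is a preference profile: each woman has a linear order on `M`,
each man a linear order on `W`. -/
def IsPref [DecidableEq I] (W M : Finset I) (p : I → Set (I × I)) : Prop :=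
  (∀ x ∈ W, IsLinearOrderOn (↑M) (p x)) ∧ (∀ y ∈ M, IsLinearOrderOn (↑W) (p y))

/-- The pushforward of a relation along a permutation. -/
def pushRel (φ : Equiv.Perm I) (R : Set (I × I)) : Set (I × I) :=
  {q : I × I | (φ.symm q.1, φ.symm q.2) ∈ R}

/-- The action of a permutation `φ` on a preference profile: `p^φ(z) = φ p(φ⁻¹ z)`. -/
def profAct (φ : Equiv.Perm I) (p : I → Set (I × I)) : I → Set (I × I) :=
  fun z => pushRel φ (p (φ.symm z))

lemma orderFix [DecidableEq I] (X : Finset I) (R : Set (I × I))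
    (hR : IsLinearOrderOn (↑X) R) (φ : Equiv.Perm I)
    (hX : X.image ⇑φ = X) (hpush : pushRel φ R = R) :
    ∀ x ∈ X, φ x = x := by
  classical
  obtain ⟨hsub, htot, hanti, htrans⟩ := hR
  have hiff : ∀ a b : I, (a, b) ∈ R ↔ (φ a, φ b) ∈ R := by
    intro a b
    constructor
    · intro h
      have : (φ a, φ b) ∈ pushRel φ R := by simp [pushRel, h]
      rwa [hpush] at this
    · intro h
      rw [← hpush] at h
      simpa [pushRel] using h
  have hmemX : ∀ a : I, a ∈ X → φ a ∈ X := by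
    intro a ha
    rw [← hX]
    exact Finset.mem_image_of_mem _ ha
  set f : I → ℕ := fun x => (X.filter (fun y => (y, x) ∈ R)).card with hf
  have hfφ : ∀ x ∈ X, f (φ x) = f x := by
    intro x hx
    have himg : X.filter (fun y => (y, φ x) ∈ R)
        = (X.filter (fun y => (y, x) ∈ R)).image ⇑φ := by
      ext y
      simp only [Finset.mem_filter, Finset.mem_image]
      constructor
      · rintro ⟨hyX, hyR⟩
        have : y ∈ X.image ⇑φ := by rw [hX]; exact hyX
        obtain ⟨z, hz, rfl⟩ := Finset.mem_image.mp this
        exact ⟨z, ⟨hz, (hiff z x).mpr hyR⟩, rfl⟩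
      · rintro ⟨z, ⟨hz, hzR⟩, rfl⟩
        exact ⟨hmemX z hz, (hiff z x).mp hzR⟩
    simp only [hf, himg]
    rw [Finset.card_image_of_injective _ φ.injective]
  have hinj : ∀ x ∈ X, ∀ y ∈ X, f x = f y → x = y := by
    have key : ∀ x ∈ X, ∀ y ∈ X, (x, y) ∈ R → f x = f y → x = y := by
      intro x hx y hy hxy hfeq
      have hsubset : X.filter (fun z => (z, x) ∈ R) ⊆ X.filter (fun z => (z, y) ∈ R) := by
        intro z hz
        simp only [Finset.mem_filter] at hz ⊢
        exact ⟨hz.1, htrans z x y hz.2 hxy⟩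
      have heq := Finset.eq_of_subset_of_card_le hsubset (le_of_eq hfeq.symm)
      have hyy : (y, y) ∈ R := by
        rcases htot y hy y hy with h | h <;> exact h
      have : y ∈ X.filter (fun z => (z, x) ∈ R) := by
        rw [heq]; exact Finset.mem_filter.mpr ⟨hy, hyy⟩
      exact hanti x y hxy (Finset.mem_filter.mp this).2
    intro x hx y hy hfeq
    rcases htot x hx y hy with h | h
    · exact key x hx y hy h hfeq
    · exact (key y hy x hx h hfeq.symm).symm
  intro x hx
  exact hinj (φ x) (hmemX x hx) x hx (hfφ x hx)

theorem stmt13 [Fintype I] [DecidableEq I] (W M : Finset I) (n : ℕ)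
    (hd : Disjoint W M) (hu : W ∪ M = Finset.univ)
    (hW : W.card = n) (hM : M.card = n) (hn : 2 ≤ n)
    (p : I → Set (I × I)) (hp : IsPref W M p) :
    ∀ φ : Equiv.Perm I, InGstar W M φ → profAct φ p = p → φ ≠ 1 → ∀ z : I, φ z ≠ z := by
  intro φ hφ hfix hne z hz
  have hzmem : z ∈ W ∨ z ∈ M := by
    have : z ∈ W ∪ M := by rw [hu]; exact Finset.mem_univ z
    exact Finset.mem_union.mp this
  have hsymm : φ.symm z = z := by
    conv_lhs => rw [← hz]
    exact φ.symm_apply_apply z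
  rcases hφ with ⟨h1, h2⟩ | ⟨h1, h2⟩
  · -- φ ∈ G
    -- fixed point gives φ preserves the order p z; deduce φ = 1
    have hpz : pushRel φ (p z) = p z := by
      have := congrFun hfix z
      simpa [profAct, hsymm] using this
    have hMfix : ∀ y ∈ M, φ y = y := by
      rcases hzmem with hzW | hzM
      · exact orderFix M (p z) (hp.1 z hzW) φ h2 hpz
      · -- z ∈ M, so p z is order on W; φ fixes W pointwise
        have hWfix : ∀ x ∈ W, φ x = x := orderFix W (p z) (hp.2 z hzM) φ h1 hpz
        -- pick some x ∈ W, use its preference order on M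
        obtain ⟨x, hxW⟩ := Finset.card_pos.mp (by omega : 0 < W.card)
        have hsx : φ.symm x = x := by
          conv_lhs => rw [← hWfix x hxW]
          exact φ.symm_apply_apply x
        have hpx : pushRel φ (p x) = p x := by
          have := congrFun hfix x
          simpa [profAct, hsx] using this
        exact orderFix M (p x) (hp.1 x hxW) φ h2 hpx
    have hWfix : ∀ x ∈ W, φ x = x := by
      obtain ⟨y, hyM⟩ := Finset.card_pos.mp (by omega : 0 < M.card)
      have hsy : φ.symm y = y := by
        conv_lhs => rw [← hMfix y hyM]
        exact φ.symm_apply_apply y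
      have hpy : pushRel φ (p y) = p y := by
        have := congrFun hfix y
        simpa [profAct, hsy] using this
      exact orderFix W (p y) (hp.2 y hyM) φ h1 hpy
    apply hne
    ext a
    have : a ∈ W ∪ M := by rw [hu]; exact Finset.mem_univ a
    rcases Finset.mem_union.mp this with h | h
    · simpa using hWfix a h
    · simpa using hMfix a h
  · -- swap case: a fixed point contradicts disjointness
    rcases hzmem with hzW | hzM
    · have : φ z ∈ M := by rw [← h1]; exact Finset.mem_image_of_mem _ hzW
      rw [hz] at this
      exact (Finset.disjoint_left.mp hd hzW) this
    · have : φ z ∈ W := by rw [← h2]; exact Finset.mem_image_of_mem _ hzM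
      rw [hz] at this
      exact (Finset.disjoint_left.mp hd this) hzM
end

section
/- Let p be a preference profile and φ ∈ Stab_{G*}(p). Then all orbits of φ on I = W ∪ M have the same size, equal to the order of φ; moreover, if φ ∈ G* \ G then the order of φ is even. -/
variable {I : Type*}

/-- The orbit of `z` under the cyclic group generated by the permutation `φ`. -/
def permOrbit (φ : Equiv.Perm I) (z : I) : Set I :=
  {w : I | ∃ k : ℤ, (φ ^ k) z = w}

/-!
A permutation in `G` that fixes a woman `w` and stabilizes `p` is an automorphism of the finite
chain `(M, p w)`; such an automorphism has finite order, so it cannot move any point strictly up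
or down, and it fixes every man. Fixing a man, it then fixes every woman. Hence the only element
of `Stab_{G*}(p)` with a fixed point is the identity, the cyclic group generated by `φ` acts
freely, and every orbit has `orderOf φ` elements. If `φ` exchanges `W` and `M`, membership in `W`
alternates along each orbit, so the orbit length is even.
-/

open Equiv Finset

section PushRel

@[simp]
lemma mem_pushRel_apply (ψ : Perm I) (R : Set (I × I)) (a b : I) :
    (ψ a, ψ b) ∈ pushRel ψ R ↔ (a, b) ∈ R := by
  simp [pushRel]

lemma pushRel_one (R : Set (I × I)) : pushRel 1 R = R := rfl

lemma pushRel_mul (φ ψ : Perm I) (R : Set (I × I)) :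
    pushRel (φ * ψ) R = pushRel φ (pushRel ψ R) := rfl

lemma pushRel_pow_eq_self {ψ : Perm I} {R : Set (I × I)} (h : pushRel ψ R = R) (k : ℕ) :
    pushRel (ψ ^ k) R = R := by
  induction k with
  | zero => exact pushRel_one R
  | succ k ih => rw [pow_succ, pushRel_mul, h, ih]

lemma pushRel_inv_eq_self {ψ : Perm I} {R : Set (I × I)} (h : pushRel ψ R = R) :
    pushRel ψ⁻¹ R = R := by
  conv_lhs => rw [← h, ← pushRel_mul, inv_mul_cancel, pushRel_one]

end PushRel

section Rigidity

variable {R : Set (I × I)} {ψ : Perm I}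

/-- Iterating `ψ` from `y` climbs `R`; as `ψ⁻¹` is a power of `ψ`, also `(y, ψ⁻¹ y) ∈ R`. -/
lemma apply_eq_self_of_pushRel_eq_of_mem {y : I} (hrefl : (y, y) ∈ R)
    (htrans : ∀ a b c, (a, b) ∈ R → (b, c) ∈ R → (a, c) ∈ R)
    (hanti : ∀ a b, (a, b) ∈ R → (b, a) ∈ R → a = b)
    (hψ : IsOfFinOrder ψ) (hR : pushRel ψ R = R) (hy : (y, ψ y) ∈ R) : ψ y = y := by
  have hchain : ∀ k : ℕ, (y, (ψ ^ k) y) ∈ R := by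
    intro k
    induction k with
    | zero => exact hrefl
    | succ k ih =>
      have hstep := (mem_pushRel_apply (ψ ^ k) R y (ψ y)).2 hy
      rw [pushRel_pow_eq_self hR k] at hstep
      exact htrans _ _ _ ih (by rwa [pow_succ, Perm.mul_apply])
  obtain ⟨k, hk⟩ := hψ.mem_powers_iff_mem_zpowers.2 (inv_mem (Subgroup.mem_zpowers ψ))
  have hdown := (mem_pushRel_apply ψ R y (ψ⁻¹ y)).2 (hk ▸ hchain k)
  rw [hR, Perm.inv_def, apply_symm_apply] at hdown
  exact (hanti _ _ hy hdown).symm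

lemma IsLinearOrderOn.refl_mem {X : Set I} (h : IsLinearOrderOn X R) {x : I} (hx : x ∈ X) :
    (x, x) ∈ R :=
  (h.2.1 x hx x hx).elim id id

lemma IsLinearOrderOn.apply_eq_self_of_pushRel_eq {X : Set I} (h : IsLinearOrderOn X R)
    (hψ : IsOfFinOrder ψ) (hX : Set.MapsTo ψ X X) (hR : pushRel ψ R = R) {y : I}
    (hy : y ∈ X) : ψ y = y := by
  have hrefl := h.refl_mem hy
  have hrefl' := h.refl_mem (hX hy)
  obtain ⟨-, htot, hanti, htrans⟩ := h
  rcases htot y hy (ψ y) (hX hy) with hup | hdown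
  · exact apply_eq_self_of_pushRel_eq_of_mem hrefl htrans hanti hψ hR hup
  · have := apply_eq_self_of_pushRel_eq_of_mem hrefl' htrans hanti hψ.inv
      (pushRel_inv_eq_self hR) (by rwa [Perm.inv_def, symm_apply_apply])
    rw [Perm.inv_def, symm_apply_apply] at this
    exact this.symm

end Rigidity

section ProfAct

lemma profAct_one (p : I → Set (I × I)) : profAct 1 p = p := rfl

lemma profAct_mul (φ ψ : Perm I) (p : I → Set (I × I)) :
    profAct (φ * ψ) p = profAct φ (profAct ψ p) := rfl

lemma profAct_pow_eq_self {φ : Perm I} {p : I → Set (I × I)} (h : profAct φ p = p) (k : ℕ) :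
    profAct (φ ^ k) p = p := by
  induction k with
  | zero => exact profAct_one p
  | succ k ih => rw [pow_succ, profAct_mul, h, ih]

lemma pushRel_eq_of_profAct_eq {ψ : Perm I} {p : I → Set (I × I)} (h : profAct ψ p = p)
    {z : I} (hz : ψ z = z) : pushRel ψ (p z) = p z := by
  have := congrFun h z
  rwa [profAct, ψ.symm_apply_eq.2 hz.symm] at this

end ProfAct

section Partition

variable [DecidableEq I] {W M : Finset I}

lemma InGstar.mul {φ ψ : Perm I} (hφ : InGstar W M φ) (hψ : InGstar W M ψ) :
    InGstar W M (φ * ψ) := by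
  have himage (s : Finset I) : s.image ⇑(φ * ψ) = (s.image ψ).image φ := by
    rw [image_image]; rfl
  rcases hψ with ⟨hW, hM⟩ | ⟨hW, hM⟩ <;> rcases hφ with ⟨hW', hM'⟩ | ⟨hW', hM'⟩ <;>
    simp only [InGstar, himage, hW, hM, hW', hM'] <;> tauto

lemma InGstar.pow {φ : Perm I} (hφ : InGstar W M φ) (k : ℕ) : InGstar W M (φ ^ k) := by
  induction k with
  | zero => exact Or.inl ⟨image_id, image_id⟩
  | succ k ih => rw [pow_succ]; exact ih.mul hφ

lemma InGstar.inG_of_apply_eq_self [Fintype I] (hd : Disjoint W M) (hu : W ∪ M = univ)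
    {φ : Perm I} (hφ : InGstar W M φ) {z : I} (hz : φ z = z) : InG W M φ := by
  refine hφ.resolve_right fun ⟨hWM, hMW⟩ => ?_
  rcases mem_union.1 (hu ▸ mem_univ z) with hzW | hzM
  · exact disjoint_left.1 hd hzW (hz ▸ hWM ▸ mem_image_of_mem φ hzW)
  · exact disjoint_left.1 hd (hz ▸ hMW ▸ mem_image_of_mem φ hzM) hzM

lemma InGstar.apply_mem_iff_not_mem [Fintype I] (hd : Disjoint W M) (hu : W ∪ M = univ)
    {φ : Perm I} (hφ : InGstar W M φ) (hnG : ¬ InG W M φ) (x : I) : φ x ∈ W ↔ x ∉ W := by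
  obtain ⟨hWM, hMW⟩ := hφ.resolve_left hnG
  refine ⟨fun hφx hx => disjoint_left.1 hd hφx (hWM ▸ mem_image_of_mem φ hx), fun hx => ?_⟩
  exact hMW ▸ mem_image_of_mem φ ((mem_union.1 (hu ▸ mem_univ x)).resolve_left hx)

lemma eq_one_of_profAct_eq_of_apply_eq_self [Fintype I] (hd : Disjoint W M)
    (hu : W ∪ M = univ) (hWne : W.Nonempty) (hMne : M.Nonempty) {p : I → Set (I × I)}
    (hp : IsPref W M p) {ψ : Perm I} (hψ : InGstar W M ψ) (hstab : profAct ψ p = p) {z : I}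
    (hz : ψ z = z) : ψ = 1 := by
  obtain ⟨hWW, hMM⟩ := hψ.inG_of_apply_eq_self hd hu hz
  have hfin := isOfFinOrder_of_finite ψ
  have fixM : ∀ w ∈ W, ψ w = w → ∀ y ∈ M, ψ y = y := fun w hw hw' _ hy =>
    (hp.1 w hw).apply_eq_self_of_pushRel_eq hfin
      (fun _ hx => hMM ▸ mem_image_of_mem ψ hx) (pushRel_eq_of_profAct_eq hstab hw') hy
  have fixW : ∀ y ∈ M, ψ y = y → ∀ x ∈ W, ψ x = x := fun y hy hy' _ hx =>
    (hp.2 y hy).apply_eq_self_of_pushRel_eq hfin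
      (fun _ hx => hWW ▸ mem_image_of_mem ψ hx) (pushRel_eq_of_profAct_eq hstab hy') hx
  have hfix : (∀ x ∈ W, ψ x = x) ∧ ∀ y ∈ M, ψ y = y := by
    rcases mem_union.1 (hu ▸ mem_univ z) with hzW | hzM
    · obtain ⟨y, hy⟩ := hMne
      exact ⟨fixW y hy (fixM z hzW hz y hy), fixM z hzW hz⟩
    · obtain ⟨x, hx⟩ := hWne
      exact ⟨fixW z hzM hz, fixM x hx (fixW z hzM hz x hx)⟩
  ext x
  rcases mem_union.1 (hu ▸ mem_univ x) with hx | hx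
  · exact hfix.1 x hx
  · exact hfix.2 x hx

end Partition

section Orbit

lemma ncard_permOrbit_eq_orderOf [Finite I] {φ : Perm I} {z : I}
    (hfree : ∀ k : ℕ, (φ ^ k) z = z → φ ^ k = 1) : (permOrbit φ z).ncard = orderOf φ := by
  have horbit : permOrbit φ z = MulAction.orbit (Subgroup.zpowers φ) z := by
    ext w
    simp only [permOrbit, Set.mem_ofPred_eq, MulAction.mem_orbit_iff, Subgroup.exists_zpowers]
    rfl
  have hstab : MulAction.stabilizer (Subgroup.zpowers φ) z = ⊥ := by
    ext ⟨g, hg⟩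
    obtain ⟨k, rfl⟩ := mem_powers_iff_mem_zpowers.2 hg
    simpa [Subtype.ext_iff] using ⟨hfree k, fun h => by rw [h, Perm.one_apply]⟩
  rw [horbit, ← MulAction.index_stabilizer, hstab, Subgroup.index_bot, Nat.card_zpowers]

lemma even_orderOf_of_apply_mem_iff_not_mem {α : Type*} {s : Set α} {φ : Perm α} (x : α)
    (h : ∀ x, φ x ∈ s ↔ x ∉ s) : Even (orderOf φ) := by
  have hiter : ∀ k : ℕ, (φ ^ k) x ∈ s ↔ (x ∈ s ↔ Even k) := by
    intro k
    induction k with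
    | zero => simp
    | succ k ih => rw [pow_succ', Perm.mul_apply, h, ih, Nat.even_add_one]; tauto
  have := hiter (orderOf φ)
  rw [pow_orderOf_eq_one, Perm.one_apply] at this
  tauto

end Orbit

theorem stmt14 [Fintype I] [DecidableEq I] (W M : Finset I) (n : ℕ)
    (hd : Disjoint W M) (hu : W ∪ M = Finset.univ)
    (hW : W.card = n) (hM : M.card = n) (hn : 2 ≤ n)
    (p : I → Set (I × I)) (hp : IsPref W M p)
    (φ : Equiv.Perm I) (hφ : InGstar W M φ) (hstab : profAct φ p = p) :
    (∀ z : I, (permOrbit φ z).ncard = orderOf φ) ∧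
    (¬ InG W M φ → Even (orderOf φ)) := by
  have hWne : W.Nonempty := card_pos.1 (by omega)
  have hMne : M.Nonempty := card_pos.1 (by omega)
  have hfree (k : ℕ) (z : I) (hz : (φ ^ k) z = z) : φ ^ k = 1 :=
    eq_one_of_profAct_eq_of_apply_eq_self hd hu hWne hMne hp (hφ.pow k)
      (profAct_pow_eq_self hstab k) hz
  refine ⟨fun z => ncard_permOrbit_eq_orderOf (fun k => hfree k z), fun hnG => ?_⟩
  obtain ⟨x, -⟩ := hWne
  exact even_orderOf_of_apply_mem_iff_not_mem (s := (W : Set I)) x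
    (hφ.apply_mem_iff_not_mem hd hu hnG)
end

section
/- Let φ and μ be matchings on I = W ∪ M. Then φμ = μφ if and only if there exists ν ∈ G_M with ν² = id such that μ = νφν⁻¹. -/
variable {I : Type*}

theorem stmt18 [Fintype I] [DecidableEq I] (W M : Finset I) (n : ℕ)
    (hd : Disjoint W M) (hu : W ∪ M = Finset.univ)
    (hW : W.card = n) (hM : M.card = n) (hn : 2 ≤ n)
    (φ μ : Equiv.Perm I) (hφ : IsMatching W M φ) (hμ : IsMatching W M μ) :
    φ * μ = μ * φ ↔
      ∃ ν : Equiv.Perm I, (∀ x ∈ W, ν x = x) ∧ ν * ν = 1 ∧ μ = ν * φ * ν⁻¹ := by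
  obtain ⟨hφWM, hφMW, hφ2⟩ := hφ
  obtain ⟨hμWM, hμMW, hμ2⟩ := hμ
  have hmem : ∀ z : I, z ∉ W → z ∈ M := fun z hz =>
    (Finset.mem_union.mp (hu ▸ Finset.mem_univ z)).resolve_left hz
  have hnW : ∀ z ∈ M, z ∉ W := fun z hz => Finset.disjoint_right.mp hd hz
  constructor
  · intro hc
    have hc' : ∀ x, φ (μ x) = μ (φ x) := fun x => Equiv.ext_iff.mp hc x
    set f : I → I := fun z => if z ∈ W then z else φ (μ z) with hfdef
    have hfW : ∀ z ∈ W, f z = z := fun z hz => if_pos hz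
    have hfM : ∀ z, z ∉ W → f z = φ (μ z) := fun z hz => if_neg hz
    have hinv : Function.Involutive f := by
      intro z
      by_cases hz : z ∈ W
      · rw [hfW z hz, hfW z hz]
      · rw [hfM z hz]
        have h1 : μ z ∈ W := hμMW z (hmem z hz)
        have h2 : φ (μ z) ∉ W := hnW _ (hφWM _ h1)
        rw [hfM _ h2, ← hc' (μ z), hμ2, hφ2]
    set ν : Equiv.Perm I := hinv.toPerm f with hνdef
    have hνapp : ∀ z, ν z = f z := fun z => rfl
    have hν2 : ν * ν = 1 := Equiv.ext fun z => hinv z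
    have hνinv : ν⁻¹ = ν := inv_eq_of_mul_eq_one_right hν2
    refine ⟨ν, fun x hx => hfW x hx, hν2, ?_⟩
    rw [hνinv]
    ext z
    simp only [Equiv.Perm.mul_apply, hνapp]
    by_cases hz : z ∈ W
    · have h1 : φ z ∉ W := hnW _ (hφWM _ hz)
      rw [hfW z hz, hfM _ h1, ← hc' z, hφ2]
    · have h1 : μ z ∈ W := hμMW z (hmem z hz)
      have h2 : φ (μ z) ∉ W := hnW _ (hφWM _ h1)
      rw [hfM z hz, hφ2, hfW _ h1]
  · rintro ⟨ν, hfix, hν2, rfl⟩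
    have hνinv : ν⁻¹ = ν := inv_eq_of_mul_eq_one_right hν2
    have hν2' : ∀ z, ν (ν z) = z := fun z => Equiv.ext_iff.mp hν2 z
    have hνM : ∀ z, z ∉ W → ν z ∉ W := by
      intro z hz hcon
      have h := hν2' z
      rw [hfix _ hcon] at h
      rw [← h] at hz
      exact hz hcon
    ext z
    simp only [Equiv.Perm.mul_apply, hνinv]
    by_cases hz : z ∈ W
    · have h1 : φ z ∉ W := hnW _ (hφWM _ hz)
      have h2 : ν (φ z) ∉ W := hνM _ h1
      have h3 : φ (ν (φ z)) ∈ W := hφMW _ (hmem _ h2)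
      rw [hfix z hz, hfix _ h3]
    · have h1 : ν z ∉ W := hνM z hz
      have h2 : φ (ν z) ∈ W := hφMW _ (hmem _ h1)
      have h3 : φ z ∈ W := hφMW _ (hmem _ hz)
      rw [hfix _ h2, hφ2, hfix _ h3, hφ2]
end
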